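/- Let μ > −1 and k, j ≥ 0 be integers. The complex generalized Zernike polynomials satisfy the structure relations: (k+j+μ+1)(1−zw) ∂/∂z Q^μ_{k,j}(z,w) = k(j+μ+1)(Q^μ_{k−1,j}(z,w) − Q^μ_{k,j+1}(z,w)) when k ≥ 1, with both sides vanishing when k = 0; and (k+j+μ+1)(1−zw) ∂/∂z̄ Q^μ_{k,j}(z,w) = j(k+μ+1)(Q^μ_{k,j−1}(z,w) − Q^μ_{k+1,j}(z,w)) when j ≥ 1, with both sides vanishing when j = 0. These are identities of bivariate polynomials in (z,w). -/

import Mathlib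

noncomputable def jacobiP (α β : ℝ) (n : ℕ) : Polynomial ℝ :=
  (n.factorial : ℝ)⁻¹ •
    ∑ k ∈ Finset.range (n + 1),
      ((n.choose k : ℝ) * ((ascPochhammer ℝ (n - k)).eval ((k : ℝ) + α + 1)) *
          ((ascPochhammer ℝ k).eval ((n : ℝ) + α + β + 1))) •
        ((Polynomial.X - 1) * Polynomial.C (2⁻¹ : ℝ)) ^ k

noncomputable def zernikeQ (μ : ℝ) (k j : ℕ) : MvPolynomial (Fin 2) ℂ :=
  if j ≤ k then
    MvPolynomial.C ((((j.factorial : ℝ) / ((ascPochhammer ℝ j).eval (μ + 1)) : ℝ) : ℂ)) *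
      MvPolynomial.X 0 ^ (k - j) *
      Polynomial.aeval (2 * MvPolynomial.X 0 * MvPolynomial.X 1 - 1)
        (jacobiP μ ((k - j : ℕ) : ℝ) j)
  else
    MvPolynomial.C ((((k.factorial : ℝ) / ((ascPochhammer ℝ k).eval (μ + 1)) : ℝ) : ℂ)) *
      MvPolynomial.X 1 ^ (j - k) *
      Polynomial.aeval (2 * MvPolynomial.X 0 * MvPolynomial.X 1 - 1)
        (jacobiP μ ((j - k : ℕ) : ℝ) k)

/-!
Put `u = z w - 1`. Since `(t - 1) / 2 = u` at `t = 2 z w - 1` and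
`(α + 1)_n = (α + 1)_s (α + 1 + s)_(n - s)`, the Jacobi factor of `Q^μ_{k,j}` is the terminating
Gauss series `₂F₁(-min(k,j), max(k,j) + μ + 1; μ + 1; -u)`, so `Q^μ_{k,j}` is `z^(k-j)` or
`w^(j-k)` times a polynomial in `u`. As `∂u/∂z = w` and `z w = u + 1`, each `∂/∂z` relation becomes
a one-variable contiguous relation for `₂F₁`, checked coefficientwise. The `∂/∂z̄` relations follow
by swapping the variables, since `Q^μ_{k,j}(w, z) = Q^μ_{j,k}(z, w)`.
-/

section Hypergeometric

open Polynomial Finset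

variable {K : Type*} [Field K]

theorem ascPochhammer_succ_eval_left (n : ℕ) (x : K) :
    (ascPochhammer K (n + 1)).eval x = x * (ascPochhammer K n).eval (x + 1) := by
  simp [ascPochhammer_succ_left, eval_comp]

theorem ascPochhammer_eval_mul_eval_add (m n : ℕ) (x : K) :
    (ascPochhammer K m).eval x * (ascPochhammer K n).eval (x + m) =
      (ascPochhammer K (m + n)).eval x := by
  rw [← ascPochhammer_mul, eval_mul, eval_comp]
  simp

theorem ascPochhammer_eval_ne_zero {b : K} (hb : ∀ s : ℕ, b + s ≠ 0) (n : ℕ) :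
    (ascPochhammer K n).eval b ≠ 0 := fun h => by
  obtain ⟨s, -, hs⟩ := (ascPochhammer_eval_eq_zero_iff n b).1 h
  exact hb s (by rw [hs]; ring)

theorem cast_choose_succ_mul (n t : ℕ) :
    (n.choose (t + 1) : K) * (t + 1) = n.choose t * (n - t) := by
  rcases le_or_gt t n with h | h
  · rw [← Nat.cast_sub h]
    exact_mod_cast congrArg (Nat.cast : ℕ → K) (Nat.choose_succ_right_eq n t)
  · simp [Nat.choose_eq_zero_of_lt h, Nat.choose_eq_zero_of_lt (Nat.lt_succ_of_lt h)]

theorem coeff_X_mul_derivative (p : K[X]) (t : ℕ) :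
    (X * derivative p).coeff t = t * p.coeff t := by
  rcases t with _ | t
  · simp
  · rw [coeff_X_mul, coeff_derivative]
    push_cast
    ring

/-- The terminating Gauss series `₂F₁(-n, a; b; -X)`. -/
noncomputable def hyperPoly (n : ℕ) (a b : K) : K[X] :=
  ∑ s ∈ range (n + 1),
    monomial s (n.choose s * (ascPochhammer K s).eval a / (ascPochhammer K s).eval b)

theorem coeff_hyperPoly (n : ℕ) (a b : K) (s : ℕ) :
    (hyperPoly n a b).coeff s =
      n.choose s * (ascPochhammer K s).eval a / (ascPochhammer K s).eval b := by
  rw [hyperPoly, finsetSum_coeff]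
  simp only [coeff_monomial, sum_ite_eq', mem_range]
  split_ifs with h
  · rfl
  · simp [Nat.choose_eq_zero_of_lt (by omega : n < s)]

@[simp]
theorem hyperPoly_zero (a b : K) : hyperPoly 0 a b = 1 := by
  simp [hyperPoly]

theorem hyperPoly_succ_sub_hyperPoly_sub_one {b : K} (hb : ∀ s : ℕ, b + s ≠ 0) (n : ℕ)
    (a : K) :
    C ((a - b) * (n + b)) * (hyperPoly (n + 1) a b - hyperPoly n (a - 1) b) =
      C (a + n) * (X * (C (a - b - n) * hyperPoly n a b +
        (X + 1) * derivative (hyperPoly n a b))) := by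
  ext (_ | t)
  · simp [coeff_hyperPoly]
  · have hchoose := cast_choose_succ_mul (K := K) n t
    have hPa :
        (ascPochhammer K (t + 1)).eval (a - 1) = (a - 1) * (ascPochhammer K t).eval a := by
      rw [ascPochhammer_succ_eval_left, sub_add_cancel]
    have := ascPochhammer_eval_ne_zero hb t
    have := hb t
    rw [add_mul, mul_add, mul_add]
    simp only [coeff_C_mul, coeff_sub, coeff_add, coeff_X_mul, coeff_X_mul_derivative, one_mul,
      coeff_derivative, coeff_hyperPoly, Nat.choose_succ_succ, hPa, ascPochhammer_succ_eval,
      Nat.cast_add]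
    field_simp
    -- after eliminating `C(n, t+1)`, both sides are `C(n,t) (a)_t (a-b)(n+b)(a+n) / (b)_(t+1)`
    linear_combination
      (ascPochhammer K t).eval a * ((a - b) * (n + b) - (a + n) * (a + t)) * hchoose

theorem hyperPoly_add_one_sub_hyperPoly (n : ℕ) (a b : K) :
    C ((n + 1) * a) * (hyperPoly (n + 1) (a + 1) b - hyperPoly n a b) =
      C (a + n + 1) * (X * derivative (hyperPoly (n + 1) a b)) := by
  ext (_ | t)
  · simp [coeff_hyperPoly]
  · have hchoose := cast_choose_succ_mul (K := K) n t
    have hPa : (ascPochhammer K (t + 1)).eval (a + 1) * a =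
        (ascPochhammer K (t + 1)).eval a * (a + t + 1) := by
      rw [mul_comm, ← ascPochhammer_succ_eval_left, ascPochhammer_succ_eval]
      push_cast
      ring
    simp only [coeff_C_mul, coeff_sub, coeff_X_mul_derivative, coeff_hyperPoly,
      Nat.choose_succ_succ, Nat.cast_add, Nat.cast_one, div_eq_mul_inv]
    linear_combination ((ascPochhammer K (t + 1)).eval b)⁻¹ *
      ((n + 1) * (n.choose t + n.choose (t + 1)) * hPa -
        (ascPochhammer K (t + 1)).eval a * a * hchoose)

end Hypergeometric

open Polynomial in
theorem jacobiP_eq_hyperPoly_comp {α : ℝ} (hα : ∀ s : ℕ, α + 1 + s ≠ 0) (β : ℝ) (n : ℕ) :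
    ((n.factorial : ℝ) / (ascPochhammer ℝ n).eval (α + 1)) • jacobiP α β n =
      (hyperPoly n (n + α + β + 1) (α + 1)).comp ((X - 1) * C 2⁻¹) := by
  rw [jacobiP, hyperPoly, smul_smul, Finset.smul_sum, Polynomial.sum_comp]
  refine Finset.sum_congr rfl fun k hk => ?_
  have hsplit := ascPochhammer_eval_mul_eval_add k (n - k) (α + 1)
  rw [Nat.add_sub_cancel' (Nat.lt_succ_iff.mp (Finset.mem_range.mp hk))] at hsplit
  have := ascPochhammer_eval_ne_zero hα k
  have := right_ne_zero_of_mul (hsplit ▸ ascPochhammer_eval_ne_zero hα n)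
  rw [smul_smul, monomial_comp, smul_eq_C_mul, ← hsplit,
    show (k : ℝ) + α + 1 = α + 1 + k by ring]
  congr 2
  field_simp

section Zernike

open MvPolynomial

theorem pderiv_aeval {σ : Type*} (i : σ) (p : Polynomial ℝ) (q : MvPolynomial σ ℂ) :
    pderiv i (Polynomial.aeval q p) =
      Polynomial.aeval q (Polynomial.derivative p) * pderiv i q :=
  ((pderiv i).restrictScalars ℝ).map_aeval p q

theorem C_mul_aeval_jacobiP {μ : ℝ} (hμ : ∀ s : ℕ, μ + 1 + s ≠ 0) (β : ℝ) (n : ℕ) :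
    C (((n.factorial : ℝ) / (ascPochhammer ℝ n).eval (μ + 1) : ℝ) : ℂ) *
        Polynomial.aeval (2 * X 0 * X 1 - 1 : MvPolynomial (Fin 2) ℂ) (jacobiP μ β n) =
      Polynomial.aeval (X 0 * X 1 - 1) (hyperPoly n (n + μ + β + 1) (μ + 1)) := by
  have hu : Polynomial.aeval (2 * X 0 * X 1 - 1 : MvPolynomial (Fin 2) ℂ)
      ((Polynomial.X - 1) * Polynomial.C (2⁻¹ : ℝ)) = X 0 * X 1 - 1 := by
    have h2 : (2 : MvPolynomial (Fin 2) ℂ) * algebraMap ℝ _ 2⁻¹ = 1 := by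
      rw [← map_ofNat (algebraMap ℝ (MvPolynomial (Fin 2) ℂ)) 2, ← map_mul,
        mul_inv_cancel₀ two_ne_zero, map_one]
    rw [map_mul, map_sub, Polynomial.aeval_X, map_one, Polynomial.aeval_C]
    linear_combination (X 0 * X 1 - 1 : MvPolynomial (Fin 2) ℂ) * h2
  rw [← hu, ← Polynomial.aeval_comp, ← jacobiP_eq_hyperPoly_comp hμ, map_smul, Algebra.smul_def]
  rfl

theorem zernikeQ_of_le {μ : ℝ} (hμ : ∀ s : ℕ, μ + 1 + s ≠ 0) {k j : ℕ} (h : j ≤ k) :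
    zernikeQ μ k j =
      X 0 ^ (k - j) * Polynomial.aeval (X 0 * X 1 - 1) (hyperPoly j (k + μ + 1) (μ + 1)) := by
  rw [zernikeQ, if_pos h, mul_right_comm, C_mul_aeval_jacobiP hμ, mul_comm]
  congr 3
  push_cast [Nat.cast_sub h]
  ring

theorem zernikeQ_of_ge {μ : ℝ} (hμ : ∀ s : ℕ, μ + 1 + s ≠ 0) {k j : ℕ} (h : k ≤ j) :
    zernikeQ μ k j =
      X 1 ^ (j - k) * Polynomial.aeval (X 0 * X 1 - 1) (hyperPoly k (j + μ + 1) (μ + 1)) := by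
  rcases h.eq_or_lt with rfl | hlt
  · simp [zernikeQ_of_le hμ le_rfl]
  rw [zernikeQ, if_neg hlt.not_ge, mul_right_comm, C_mul_aeval_jacobiP hμ, mul_comm]
  congr 3
  push_cast [Nat.cast_sub h]
  ring

theorem rename_swap_aeval (p : Polynomial ℝ) :
    rename (Equiv.swap (0 : Fin 2) 1) (Polynomial.aeval (X 0 * X 1 - 1) p) =
      Polynomial.aeval (X 0 * X 1 - 1 : MvPolynomial (Fin 2) ℂ) p := by
  rw [← AlgHom.restrictScalars_apply ℝ, ← Polynomial.aeval_algHom_apply]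
  simp [mul_comm]

theorem rename_swap_zernikeQ {μ : ℝ} (hμ : ∀ s : ℕ, μ + 1 + s ≠ 0) (k j : ℕ) :
    rename (Equiv.swap 0 1) (zernikeQ μ k j) = zernikeQ μ j k := by
  rcases le_total j k with h | h <;>
    simp [zernikeQ_of_le hμ h, zernikeQ_of_ge hμ h, rename_swap_aeval]

theorem C_ofReal {σ : Type*} (r : ℝ) : (C (r : ℂ) : MvPolynomial σ ℂ) = algebraMap ℝ _ r := rfl

theorem zernikeQ_structure_pderiv_zero_of_lt {μ : ℝ} (hμ : ∀ s : ℕ, μ + 1 + s ≠ 0) {k j : ℕ}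
    (hjk : j < k) :
    C ((k + j + μ + 1 : ℝ) : ℂ) *
        ((1 - X 0 * X 1) * pderiv (0 : Fin 2) (zernikeQ μ k j)) =
      C ((k * (j + μ + 1) : ℝ) : ℂ) *
        (zernikeQ μ (k - 1) j - zernikeQ μ k (j + 1)) := by
  obtain ⟨m, rfl⟩ : ∃ m, k = j + m + 1 := ⟨k - j - 1, by omega⟩
  have key := congrArg
    (fun p => X 0 ^ m * Polynomial.aeval (X 0 * X 1 - 1 : MvPolynomial (Fin 2) ℂ) p)
    (hyperPoly_succ_sub_hyperPoly_sub_one hμ j ((j + m + 1 : ℕ) + μ + 1))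
  rw [show ((j + m + 1 : ℕ) : ℝ) + μ + 1 - 1 = (j + m : ℕ) + μ + 1 by push_cast; ring] at key
  rw [Nat.add_sub_cancel, zernikeQ_of_le hμ (by omega), zernikeQ_of_le hμ (by omega),
    zernikeQ_of_le hμ (by omega), show j + m + 1 - j = m + 1 by omega,
    show j + m - j = m by omega, show j + m + 1 - (j + 1) = m by omega]
  simp only [C_ofReal, Polynomial.aeval_C, Polynomial.aeval_X, map_add, map_sub, map_mul, map_one,
    map_natCast, Nat.cast_add, Nat.cast_one, Derivation.leibniz, Derivation.leibniz_pow,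
    Derivation.map_one_eq_zero, pderiv_aeval, pderiv_X_self, pderiv_X_of_ne one_ne_zero,
    smul_eq_mul, nsmul_eq_mul, Nat.add_sub_cancel] at key ⊢
  linear_combination key

theorem zernikeQ_structure_pderiv_zero_of_le {μ : ℝ} (hμ : ∀ s : ℕ, μ + 1 + s ≠ 0) {k j : ℕ}
    (hk : 1 ≤ k) (hkj : k ≤ j) :
    C ((k + j + μ + 1 : ℝ) : ℂ) *
        ((1 - X 0 * X 1) * pderiv (0 : Fin 2) (zernikeQ μ k j)) =
      C ((k * (j + μ + 1) : ℝ) : ℂ) *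
        (zernikeQ μ (k - 1) j - zernikeQ μ k (j + 1)) := by
  obtain ⟨n, rfl⟩ : ∃ n, k = n + 1 := ⟨k - 1, by omega⟩
  obtain ⟨m, rfl⟩ : ∃ m, j = n + 1 + m := ⟨j - (n + 1), by omega⟩
  have key := congrArg
    (fun p => X 1 ^ (m + 1) * Polynomial.aeval (X 0 * X 1 - 1 : MvPolynomial (Fin 2) ℂ) p)
    (hyperPoly_add_one_sub_hyperPoly n ((n + 1 + m : ℕ) + μ + 1) (μ + 1))
  rw [show ((n + 1 + m : ℕ) : ℝ) + μ + 1 + 1 = (n + 1 + m + 1 : ℕ) + μ + 1 by push_cast; ring]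
    at key
  rw [Nat.add_sub_cancel, zernikeQ_of_ge hμ (by omega), zernikeQ_of_ge hμ (by omega),
    zernikeQ_of_ge hμ (by omega), show n + 1 + m - (n + 1) = m by omega,
    show n + 1 + m - n = m + 1 by omega, show n + 1 + m + 1 - (n + 1) = m + 1 by omega]
  simp only [C_ofReal, Polynomial.aeval_C, Polynomial.aeval_X, map_add, map_sub, map_mul, map_one,
    map_natCast, Nat.cast_add, Nat.cast_one, Derivation.leibniz, Derivation.leibniz_pow,
    Derivation.map_one_eq_zero, pderiv_aeval, pderiv_X_self, pderiv_X_of_ne one_ne_zero,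
    smul_eq_mul, nsmul_eq_mul] at key ⊢
  linear_combination key

theorem pderiv_zero_zernikeQ_zero_left {μ : ℝ} (hμ : ∀ s : ℕ, μ + 1 + s ≠ 0) (j : ℕ) :
    pderiv (0 : Fin 2) (zernikeQ μ 0 j) = 0 := by
  simp [zernikeQ_of_ge hμ (Nat.zero_le j), pderiv_X_of_ne one_ne_zero]

theorem zernikeQ_structure_pderiv_zero {μ : ℝ} (hμ : ∀ s : ℕ, μ + 1 + s ≠ 0) {k j : ℕ}
    (hk : 1 ≤ k) :
    C ((k + j + μ + 1 : ℝ) : ℂ) *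
        ((1 - X 0 * X 1) * pderiv (0 : Fin 2) (zernikeQ μ k j)) =
      C ((k * (j + μ + 1) : ℝ) : ℂ) *
        (zernikeQ μ (k - 1) j - zernikeQ μ k (j + 1)) := by
  rcases lt_or_ge j k with h | h
  · exact zernikeQ_structure_pderiv_zero_of_lt hμ h
  · exact zernikeQ_structure_pderiv_zero_of_le hμ hk h

theorem pderiv_one_zernikeQ {μ : ℝ} (hμ : ∀ s : ℕ, μ + 1 + s ≠ 0) (k j : ℕ) :
    pderiv (1 : Fin 2) (zernikeQ μ k j) =
      rename (Equiv.swap 0 1) (pderiv (0 : Fin 2) (zernikeQ μ j k)) := by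
  rw [← rename_swap_zernikeQ hμ j k]
  simpa using pderiv_rename (Equiv.swap (0 : Fin 2) 1).injective 0 (zernikeQ μ j k)

theorem zernikeQ_structure_pderiv_one {μ : ℝ} (hμ : ∀ s : ℕ, μ + 1 + s ≠ 0) {k j : ℕ}
    (hj : 1 ≤ j) :
    C ((k + j + μ + 1 : ℝ) : ℂ) *
        ((1 - X 0 * X 1) * pderiv (1 : Fin 2) (zernikeQ μ k j)) =
      C ((j * (k + μ + 1) : ℝ) : ℂ) *
        (zernikeQ μ k (j - 1) - zernikeQ μ (k + 1) j) := by
  have h := congrArg (rename (Equiv.swap 0 1)) (zernikeQ_structure_pderiv_zero hμ hj (j := k))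
  simp only [map_mul, map_sub, map_one, rename_C, rename_X, Equiv.swap_apply_left,
    Equiv.swap_apply_right, rename_swap_zernikeQ hμ] at h
  rw [pderiv_one_zernikeQ hμ, add_comm (k : ℝ), mul_comm (X 0), ← h]

end Zernike

open MvPolynomial in
theorem zernike_structure (μ : ℝ) (hμ : μ > -1) (k j : ℕ) :
    (1 ≤ k →
      C ((((k : ℝ) + (j : ℝ) + μ + 1 : ℝ)) : ℂ) *
          ((1 - X 0 * X 1) * pderiv (0 : Fin 2) (zernikeQ μ k j)) =
        C ((((k : ℝ) * ((j : ℝ) + μ + 1) : ℝ)) : ℂ) *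
          (zernikeQ μ (k - 1) j - zernikeQ μ k (j + 1))) ∧
    (k = 0 →
      C ((((k : ℝ) + (j : ℝ) + μ + 1 : ℝ)) : ℂ) *
          ((1 - X 0 * X 1) * pderiv (0 : Fin 2) (zernikeQ μ k j)) = 0) ∧
    (1 ≤ j →
      C ((((k : ℝ) + (j : ℝ) + μ + 1 : ℝ)) : ℂ) *
          ((1 - X 0 * X 1) * pderiv (1 : Fin 2) (zernikeQ μ k j)) =
        C ((((j : ℝ) * ((k : ℝ) + μ + 1) : ℝ)) : ℂ) *
          (zernikeQ μ k (j - 1) - zernikeQ μ (k + 1) j)) ∧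
    (j = 0 →
      C ((((k : ℝ) + (j : ℝ) + μ + 1 : ℝ)) : ℂ) *
          ((1 - X 0 * X 1) * pderiv (1 : Fin 2) (zernikeQ μ k j)) = 0) := by
  have hμ' : ∀ s : ℕ, μ + 1 + s ≠ 0 := fun s =>
    (by linarith [(s.cast_nonneg : (0 : ℝ) ≤ s)] : 0 < μ + 1 + s).ne'
  refine ⟨zernikeQ_structure_pderiv_zero hμ', ?_, zernikeQ_structure_pderiv_one hμ', ?_⟩
  · rintro rfl
    rw [pderiv_zero_zernikeQ_zero_left hμ', mul_zero, mul_zero]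
  · rintro rfl
    rw [pderiv_one_zernikeQ hμ', pderiv_zero_zernikeQ_zero_left hμ', map_zero, mul_zero, mul_zero]
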